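/- Let G be a σ-pro-p-group, let ε ∈ {+1,−1}, and let a ∈ G be such that σ(a) is conjugate in G to a^ε. Then there exists b ∈ G^ε that is conjugate in G to a; moreover, any two elements of G^ε that are conjugate in G to a are conjugate to each other by an element of G⁺. -/

import Mathlib

/-!
Both parts look for a fixed point of an involution on a closed set `X ⊆ G`: `x ↦ σ(x)^ε` on the
conjugacy class of `a`, and `σ` on the set of conjugators from `b` to `b'`, a coset of the
centralizer of `b`. In a finite quotient `G/M` by a `σ`-invariant open normal subgroup the image
of `X` is a conjugacy class or a coset of a subgroup, so its cardinality divides `p^n` and is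
odd, and the induced involution fixes a point of it. By compactness some point of `X` is then
fixed modulo every open normal subgroup, hence fixed, as these subgroups intersect trivially.
-/

open Function Set
open scoped Pointwise

theorem zpow_zpow_of_mul_self_eq_one {G : Type*} [Group G] {ε : ℤ} (hε : ε * ε = 1) (x : G) :
    (x ^ ε) ^ ε = x := by
  rw [← zpow_mul, hε, zpow_one]

theorem IsConj.zpow {G : Type*} [Group G] {a b : G} (n : ℤ) (h : IsConj a b) :
    IsConj (a ^ n) (b ^ n) := by
  obtain ⟨c, rfl⟩ := isConj_iff.mp h
  exact isConj_iff.mpr ⟨c, conj_zpow.symm⟩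

theorem MonoidHom.involutive_zpow_comp {G : Type*} [Group G] {σ : G →* G} (hσ : Involutive σ)
    {ε : ℤ} (hε : ε * ε = 1) : Involutive fun x => σ x ^ ε := fun x => by
  simp only [map_zpow, hσ x, zpow_zpow_of_mul_self_eq_one hε]

theorem Function.Involutive.exists_mem_eq_of_odd_ncard {α : Type*} {g : α → α}
    (hg : Involutive g) {S : Set α} (hgS : MapsTo g S S) (hS : Odd S.ncard) :
    ∃ x ∈ S, g x = x := by
  classical
  have : Fintype S := (Set.finite_of_ncard_pos hS.pos).fintype
  have : Fact (Nat.Prime 2) := ⟨Nat.prime_two⟩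
  let r : Function.End S := hgS.restrict
  have hr : r ^ 2 ^ 1 = 1 := funext fun x => Subtype.ext (hg x)
  have hS' : Fintype.card S % 2 = 1 := by
    rwa [← Nat.odd_iff, ← Nat.card_eq_fintype_card, Nat.card_coe_set_eq]
  obtain ⟨⟨x, hx⟩, hrx⟩ : Nonempty r.fixedPoints := by
    rw [← Fintype.card_pos_iff]
    have : Fintype.card S % 2 = Fintype.card r.fixedPoints % 2 :=
      Equiv.Perm.card_fixedPoints_modEq hr
    omega
  exact ⟨x, hx, congrArg Subtype.val hrx⟩

theorem Function.Semiconj.exists_mem_apply_eq_of_odd_ncard_image {α β : Type*} {π : α → β}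
    {f : α → α} {g : β → β} (hπ : Semiconj π f g) (hg : Involutive g) {X : Set α}
    (hf : MapsTo f X X) (hX : Odd (π '' X).ncard) : ∃ x ∈ X, π (f x) = π x := by
  obtain ⟨_, ⟨x, hx, rfl⟩, hgx⟩ := hg.exists_mem_eq_of_odd_ncard (hπ.mapsTo_image hf) hX
  exact ⟨x, hx, (hπ x).trans hgx⟩

section Conjugation

variable {G Q : Type*} [Group G] [Group Q]

theorem MonoidHom.image_conjugatesOf {φ : G →* Q} (hφ : Surjective φ) (a : G) :
    φ '' conjugatesOf a = conjugatesOf (φ a) := by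
  ext y
  constructor
  · rintro ⟨x, hx, rfl⟩
    exact φ.map_isConj hx
  · intro hy
    obtain ⟨c, rfl⟩ := isConj_iff.mp hy
    obtain ⟨u, rfl⟩ := hφ c
    exact ⟨u * a * u⁻¹, isConj_iff.mpr ⟨u, rfl⟩, by simp only [map_mul, map_inv]⟩

theorem ncard_conjugatesOf_dvd (a : G) : (conjugatesOf a).ncard ∣ Nat.card G := by
  have horbit : conjugatesOf a = MulAction.orbit (ConjAct G) a :=
    Set.ext fun _ => isConj_comm.trans ConjAct.mem_orbit_conjAct.symm
  rw [horbit, ← MulAction.index_stabilizer, ← Nat.card_congr ConjAct.ofConjAct.toEquiv]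
  exact Subgroup.index_dvd_card _

theorem ncard_image_smul_subgroup_dvd (φ : G →* Q) (c : G) (H : Subgroup G) :
    (φ '' (c • (H : Set G))).ncard ∣ Nat.card Q := by
  rw [image_smul_distrib, ncard_smul_set, ← Subgroup.coe_map, ← Nat.card_coe_set_eq]
  exact Subgroup.card_subgroup_dvd_card _

theorem setOf_conj_eq_smul_centralizer (b c : G) :
    {d | d * b * d⁻¹ = c * b * c⁻¹} = c • (Subgroup.centralizer {b} : Set G) := by
  ext d
  rw [mem_smul_set_iff_inv_smul_mem, smul_eq_mul, SetLike.mem_coe,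
    Subgroup.mem_centralizer_singleton_iff, mem_ofPred_eq]
  constructor
  · intro h
    calc c⁻¹ * d * b = c⁻¹ * (d * b * d⁻¹) * d := by group
      _ = b * (c⁻¹ * d) := by rw [h]; group
  · intro h
    calc d * b * d⁻¹ = c * (c⁻¹ * d * b) * d⁻¹ := by group
      _ = c * b * c⁻¹ := by rw [h]; group

variable {σ : G →* G} {ε : ℤ}

theorem mapsTo_conjugatesOf_zpow {a : G} (ha : IsConj (σ a) (a ^ ε)) (hε : ε * ε = 1) :
    MapsTo (fun x => σ x ^ ε) (conjugatesOf a) (conjugatesOf a) := fun x (hx : IsConj a x) => by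
  have h := (ha.symm.zpow ε).trans ((σ.map_isConj hx).zpow ε)
  rwa [zpow_zpow_of_mul_self_eq_one hε] at h

theorem mapsTo_setOf_conj_eq (hε : ε * ε = 1) {b b' : G} (hb : σ b = b ^ ε)
    (hb' : σ b' = b' ^ ε) : MapsTo σ {d | d * b * d⁻¹ = b'} {d | d * b * d⁻¹ = b'} :=
  fun d (hd : d * b * d⁻¹ = b') => by
    have h : (σ d * b * (σ d)⁻¹) ^ ε = b' ^ ε := by
      rw [conj_zpow, ← hb, ← hb', ← hd, map_mul, map_mul, map_inv]
    show σ d * b * (σ d)⁻¹ = b'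
    simpa only [zpow_zpow_of_mul_self_eq_one hε] using congrArg (· ^ ε) h

end Conjugation

theorem OpenNormalSubgroup.exists_le_comap_le {G : Type*} [Group G] [TopologicalSpace G]
    {σ : G →* G} (hσcont : Continuous σ) (hσ : Involutive σ) (N : OpenNormalSubgroup G) :
    ∃ M : OpenNormalSubgroup G, M ≤ N ∧ (M : Subgroup G) ≤ (M : Subgroup G).comap σ := by
  let Nσ : OpenNormalSubgroup G := ⟨N.toOpenSubgroup.comap σ hσcont, N.isNormal'.comap _⟩
  refine ⟨N ⊓ Nσ, inf_le_left, fun x ⟨hxN, hxNσ⟩ => ⟨hxNσ, ?_⟩⟩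
  show σ (σ x) ∈ N
  rwa [hσ]

section Closed

variable {G : Type*} [Group G] [TopologicalSpace G] [IsTopologicalGroup G] [T2Space G]

theorem isClosed_conjugatesOf [CompactSpace G] (a : G) : IsClosed (conjugatesOf a) := by
  have hrange : conjugatesOf a = range fun c => c * a * c⁻¹ :=
    Set.ext fun _ => isConj_iff.trans (by rfl)
  rw [hrange]
  exact (isCompact_range (by fun_prop)).isClosed

theorem isClosed_setOf_conj_eq (b b' : G) : IsClosed {d | d * b * d⁻¹ = b'} :=
  isClosed_eq (by fun_prop) continuous_const

end Closed

section Profinite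

variable {G : Type*} [Group G] [TopologicalSpace G] [IsTopologicalGroup G] [CompactSpace G]
  [TotallyDisconnectedSpace G]

theorem exists_mem_eq_of_forall_openNormalSubgroup {X : Set G} (hX : IsClosed X) {f : G → G}
    (hf : Continuous f) (happrox : ∀ N : OpenNormalSubgroup G, ∃ x ∈ X, (f x)⁻¹ * x ∈ N) :
    ∃ x ∈ X, f x = x := by
  have : Nonempty (OpenNormalSubgroup G) := ⟨⟨⊤, (inferInstance : (⊤ : Subgroup G).Normal)⟩⟩
  let F (N : OpenNormalSubgroup G) : Set G := X ∩ (fun x => (f x)⁻¹ * x) ⁻¹' N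
  have hF_closed (N : OpenNormalSubgroup G) : IsClosed (F N) :=
    hX.inter (N.toOpenSubgroup.isClosed.preimage (hf.inv.mul continuous_id))
  have hF_mono : Monotone F := fun N N' hNN' => inter_subset_inter_right X (preimage_mono hNN')
  obtain ⟨x, hx⟩ := IsCompact.nonempty_iInter_of_directed_nonempty_isCompact_isClosed F
    hF_mono.directed_ge happrox (fun N => (hF_closed N).isCompact) hF_closed
  rw [mem_iInter] at hx
  refine ⟨x, (hx (Classical.arbitrary _)).1, ?_⟩
  by_contra hfx
  obtain ⟨N, hN⟩ := ProfiniteGrp.exist_openNormalSubgroup_sub_open_nhds_of_one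
    (isOpen_compl_singleton (x := (f x)⁻¹ * x)) (by simpa [eq_comm, inv_mul_eq_one] using hfx)
  exact hN (hx N).2 rfl

theorem exists_mem_map_zpow_eq_self {p : ℕ} (hodd : Odd p)
    (hGpro : ∀ U : Subgroup G, U.Normal → IsOpen (U : Set G) → ∃ n : ℕ, U.index = p ^ n)
    {σ : G →* G} (hσcont : Continuous σ) (hσ : Involutive σ) {ε : ℤ} (hε : ε * ε = 1)
    {X : Set G} (hX : IsClosed X) (hXσ : MapsTo (fun x => σ x ^ ε) X X)
    (hXcard : ∀ (M : Subgroup G) [M.Normal], ((↑) '' X : Set (G ⧸ M)).ncard ∣ Nat.card (G ⧸ M)) :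
    ∃ x ∈ X, σ x ^ ε = x := by
  refine exists_mem_eq_of_forall_openNormalSubgroup hX (hσcont.zpow ε) fun N => ?_
  obtain ⟨M, hMN, hMσ⟩ := N.exists_le_comap_le hσcont hσ
  let σM : G ⧸ (M : Subgroup G) →* G ⧸ (M : Subgroup G) := QuotientGroup.map _ _ σ hMσ
  have hσM : Involutive σM := fun q => QuotientGroup.induction_on q fun x => by
    simp only [σM, QuotientGroup.map_mk, hσ x]
  have hcard : Odd (((↑) : G → G ⧸ (M : Subgroup G)) '' X).ncard := by
    obtain ⟨n, hn⟩ := hGpro M M.isNormal' M.isOpen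
    rw [Subgroup.index_eq_card] at hn
    exact (hodd.pow (n := n)).of_dvd_nat (hn ▸ hXcard M)
  obtain ⟨x, hx, hfx⟩ := Semiconj.exists_mem_apply_eq_of_odd_ncard_image
    (g := fun q => σM q ^ ε) (fun x => by simp only [σM, QuotientGroup.map_mk, QuotientGroup.mk_zpow])
    (MonoidHom.involutive_zpow_comp hσM hε) hXσ hcard
  exact ⟨x, hx, hMN (QuotientGroup.eq.mp hfx)⟩

end Profinite

theorem sigma_pro_p_group_conj_to_part_general
    {p : ℕ} (hodd : Odd p)
    {G : Type*} [Group G] [TopologicalSpace G] [IsTopologicalGroup G]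
    [CompactSpace G] [TotallyDisconnectedSpace G]
    (hGpro : ∀ U : Subgroup G, U.Normal → IsOpen (U : Set G) → ∃ n : ℕ, U.index = p ^ n)
    (σ : G ≃* G) (hσcont : Continuous σ) (hσ : ∀ a, σ (σ a) = a)
    (ε : ℤ) (hε : ε = 1 ∨ ε = -1)
    (a : G) (ha : IsConj (σ a) (a ^ ε)) :
    (∃ b : G, σ b = b ^ ε ∧ IsConj a b) ∧
    ∀ b b' : G, σ b = b ^ ε → σ b' = b' ^ ε → IsConj a b → IsConj a b' →
      ∃ d : G, σ d = d ∧ d * b * d⁻¹ = b' := by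
  have hεε : ε * ε = 1 := by rcases hε with rfl | rfl <;> rfl
  refine ⟨?_, fun b b' hb hb' hab hab' => ?_⟩
  · obtain ⟨b, hab, hσb⟩ := exists_mem_map_zpow_eq_self hodd hGpro (σ := σ) hσcont hσ hεε
      (isClosed_conjugatesOf a) (mapsTo_conjugatesOf_zpow ha hεε) fun M _ =>
        MonoidHom.image_conjugatesOf (QuotientGroup.mk'_surjective M) a ▸ ncard_conjugatesOf_dvd _
    exact ⟨b, (zpow_zpow_of_mul_self_eq_one hεε (σ b)).symm.trans (congrArg (· ^ ε) hσb), hab⟩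
  · obtain ⟨c, rfl⟩ := isConj_iff.mp (hab.symm.trans hab')
    obtain ⟨d, hd, hσd⟩ := exists_mem_map_zpow_eq_self hodd hGpro (σ := σ) hσcont hσ
      (ε := 1) (mul_one 1) (isClosed_setOf_conj_eq b _)
      (by simpa only [zpow_one] using mapsTo_setOf_conj_eq hεε hb hb') fun M _ =>
        setOf_conj_eq_smul_centralizer b c ▸ ncard_image_smul_subgroup_dvd (QuotientGroup.mk' M) c _
    exact ⟨d, (zpow_one _).symm.trans hσd, hd⟩

/-- Let `G` be a `σ`-pro-`p`-group, `ε ∈ {+1, −1}`, and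
`a ∈ G` with `σ(a)` conjugate in `G` to `a^ε`. Then there exists `b ∈ G^ε`
conjugate in `G` to `a`; moreover any two elements of `G^ε` that are conjugate
in `G` to `a` are conjugate to each other by an element of `G⁺`. -/
theorem sigma_pro_p_group_conj_to_part
    {p : ℕ} (hp : p.Prime) (hodd : Odd p)
    {G : Type*} [Group G] [TopologicalSpace G] [IsTopologicalGroup G]
    [CompactSpace G] [T2Space G] [TotallyDisconnectedSpace G]
    (hGpro : ∀ U : Subgroup G, U.Normal → IsOpen (U : Set G) → ∃ n : ℕ, U.index = p ^ n)
    (σ : G ≃* G) (hσcont : Continuous σ) (hσ : ∀ a, σ (σ a) = a)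
    (ε : ℤ) (hε : ε = 1 ∨ ε = -1)
    (a : G) (ha : IsConj (σ a) (a ^ ε)) :
    (∃ b : G, σ b = b ^ ε ∧ IsConj a b) ∧
    ∀ b b' : G, σ b = b ^ ε → σ b' = b' ^ ε → IsConj a b → IsConj a b' →
      ∃ d : G, σ d = d ∧ d * b * d⁻¹ = b' :=
  sigma_pro_p_group_conj_to_part_general hodd hGpro σ hσcont hσ ε hε a ha
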